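/- Let dν be a finite positive Borel measure on the closed unit disk. If both ξ = 0 and some η in the open unit disk renormalize dν (i.e., ∫ X_s ∘ d_η dν = 0 and ∫ X_s dν = 0 for all directions s ∈ S¹, where X_s(z) = f(|z|)·(z·s)/|z| with f monotone increasing, positive on (0,1], f(0)=0), then η = 0. -/

import Mathlib

/-!
Write `η = t s` with `t = ‖η‖ ∈ (0, 1)` and `‖s‖ = 1`. Rotating by `s` reduces the comparison of
`X_s ∘ d_η` with `X_s` to that of `X_1 ∘ d_t` with `X_1`, and `d_t u` is a positive multiple of
`(1 - t²) u + a` for a real `a ≥ 0`. Hence `d_t` never decreases the cosine `Re u / ‖u‖` of the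
argument; it increases `‖u‖` when `Re u ≥ 0`, and decreases it when `Re (d_t u) < 0`. As `f` is
increasing, `X_1 (d_t u) > X_1 u` on the whole disk, so `X_s ∘ d_η - X_s` is a strictly positive
function with `ν`-integral `0`, which forces `ν = 0`.
-/

open Complex Metric MeasureTheory

/-- The Möbius transformation `d_ξ(z) = (z+ξ)/(conj ξ · z + 1)` of the unit disk. -/
noncomputable def diskMobius (ξ z : ℂ) : ℂ := (z + ξ) / ((starRingEnd ℂ) ξ * z + 1)

/-- `X_s(z) = f(|z|)·(z·s)/|z|`, where `z·s` is the Euclidean inner product of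
`z, s ∈ ℝ² ≅ ℂ`; by convention `X_s(0) = 0`. -/
noncomputable def dirEigenfunction (f : ℝ → ℝ) (s z : ℂ) : ℝ :=
  if z = 0 then 0
  else f ‖z‖ * (z.re * s.re + z.im * s.im) / ‖z‖

open ComplexConjugate

namespace Complex

lemma re_div_norm_smul {c : ℝ} (hc : 0 < c) (v : ℂ) : (c • v).re / ‖c • v‖ = v.re / ‖v‖ := by
  rw [smul_re, norm_smul, Real.norm_of_nonneg hc.le, smul_eq_mul, mul_div_mul_left _ _ hc.ne']

lemma sq_norm_eq_re_sq_add_im_sq (z : ℂ) : ‖z‖ ^ 2 = z.re ^ 2 + z.im ^ 2 := by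
  rw [Complex.sq_norm, normSq_apply]; ring

lemma re_div_norm_le_re_add_ofReal_div_norm (v : ℂ) {a : ℝ} (ha : 0 ≤ a) :
    v.re / ‖v‖ ≤ (v + a).re / ‖v + a‖ := by
  rcases eq_or_ne v 0 with rfl | hv
  · simpa using div_nonneg ha (abs_nonneg a)
  rcases eq_or_ne (v + a) 0 with hva | hva
  · have hre : v.re + a = 0 := by simpa using congrArg re hva
    rw [hva, norm_zero, div_zero]
    exact div_nonpos_of_nonpos_of_nonneg (by linarith) (norm_nonneg v)
  rw [div_le_div_iff₀ (norm_pos_iff.2 hv) (norm_pos_iff.2 hva)]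
  have hv2 := sq_norm_eq_re_sq_add_im_sq v
  have hva2 := sq_norm_eq_re_sq_add_im_sq (v + a)
  simp only [add_re, add_im, ofReal_re, ofReal_im, add_zero] at hva2 ⊢
  have hy := sq_nonneg v.im
  rcases le_or_gt 0 v.re with hx | hx
  · rw [← sq_le_sq₀ (by positivity) (by positivity)]
    nlinarith [mul_nonneg hy (mul_nonneg ha (by linarith : 0 ≤ 2 * v.re + a))]
  rcases le_or_gt 0 (v.re + a) with hxa | hxa
  · nlinarith [norm_nonneg v, norm_nonneg (v + a)]
  suffices -(v.re + a) * ‖v‖ ≤ -v.re * ‖v + a‖ by linarith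
  rw [← sq_le_sq₀ (by nlinarith [norm_nonneg v]) (by nlinarith [norm_nonneg (v + a)])]
  nlinarith [mul_nonneg hy (mul_nonneg ha (by linarith : 0 ≤ -(2 * v.re + a)))]

lemma norm_lt_norm_iff_normSq_lt {z w : ℂ} : ‖z‖ < ‖w‖ ↔ normSq z < normSq w := by
  rw [← Complex.sq_norm, ← Complex.sq_norm, sq_lt_sq₀ (norm_nonneg z) (norm_nonneg w)]

lemma normSq_lt_one_of_norm_lt_one {z : ℂ} (hz : ‖z‖ < 1) : normSq z < 1 := by
  simpa using norm_lt_norm_iff_normSq_lt.1 (hz.trans_eq norm_one.symm)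

end Complex

section DiskMobius

lemma normSq_diskMobius_denom_sub (ξ z : ℂ) :
    normSq (conj ξ * z + 1) - normSq (z + ξ) = (1 - normSq ξ) * (1 - normSq z) := by
  simp only [normSq_apply, add_re, add_im, mul_re, mul_im, conj_re, conj_im, one_re, one_im]
  ring

lemma normSq_lt_normSq_diskMobius_denom {ξ z : ℂ} (hξ : ‖ξ‖ < 1) (hz : ‖z‖ < 1) :
    normSq (z + ξ) < normSq (conj ξ * z + 1) := by
  have := normSq_diskMobius_denom_sub ξ z
  nlinarith [mul_pos (sub_pos.2 (normSq_lt_one_of_norm_lt_one hξ))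
    (sub_pos.2 (normSq_lt_one_of_norm_lt_one hz))]

lemma normSq_diskMobius_denom_pos {ξ z : ℂ} (hξ : ‖ξ‖ < 1) (hz : ‖z‖ < 1) :
    0 < normSq (conj ξ * z + 1) :=
  (normSq_nonneg _).trans_lt (normSq_lt_normSq_diskMobius_denom hξ hz)

lemma norm_diskMobius_lt_one {ξ z : ℂ} (hξ : ‖ξ‖ < 1) (hz : ‖z‖ < 1) :
    ‖diskMobius ξ z‖ < 1 := by
  rw [← norm_one (α := ℂ), norm_lt_norm_iff_normSq_lt, diskMobius, map_div₀, map_one,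
    div_lt_one (normSq_diskMobius_denom_pos hξ hz)]
  exact normSq_lt_normSq_diskMobius_denom hξ hz

lemma measurable_diskMobius (ξ : ℂ) : Measurable (diskMobius ξ) := by
  unfold diskMobius; fun_prop

lemma conj_mul_diskMobius_ofReal_mul {s : ℂ} (hs : ‖s‖ = 1) (t : ℝ) (z : ℂ) :
    conj s * diskMobius (t * s) z = diskMobius t (conj s * z) := by
  have hss : conj s * s = 1 := by rw [conj_mul', hs]; norm_num
  rw [diskMobius, diskMobius, map_mul, conj_ofReal, mul_div_assoc', mul_add, mul_left_comm,
    hss, mul_one, mul_assoc]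

variable {t : ℝ} {u : ℂ}

lemma diskMobius_ofReal_eq_smul (t : ℝ) (u : ℂ) :
    diskMobius t u = (normSq (t * u + 1))⁻¹ •
      ((1 - t ^ 2 : ℝ) • u + ((t * (1 - t ^ 2 + normSq (u + t)) : ℝ) : ℂ)) := by
  rw [diskMobius, conj_ofReal, div_eq_mul_inv, inv_def]
  apply Complex.ext <;> simp [normSq_apply, sq] <;> ring

lemma normSq_ofReal_mul_add_one_pos (ht : |t| < 1) (hu : ‖u‖ < 1) : 0 < normSq (t * u + 1) := by
  simpa using normSq_diskMobius_denom_pos (ξ := t) (by simpa using ht) hu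

lemma re_diskMobius_ofReal (t : ℝ) (u : ℂ) :
    (diskMobius t u).re =
      (normSq (t * u + 1))⁻¹ * ((1 + t ^ 2) * u.re + t * (1 + normSq u)) := by
  rw [diskMobius_ofReal_eq_smul]
  simp [normSq_apply, sq]
  ring

lemma normSq_diskMobius_ofReal_sub (hD : (t : ℂ) * u + 1 ≠ 0) :
    normSq (diskMobius t u) - normSq u =
      t * (1 - normSq u) * (2 * u.re + t * (1 + normSq u)) / normSq (t * u + 1) := by
  rw [diskMobius, conj_ofReal, map_div₀, eq_div_iff (normSq_pos.2 hD).ne', sub_mul,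
    div_mul_cancel₀ _ (normSq_pos.2 hD).ne']
  simp only [normSq_apply, add_re, add_im, mul_re, mul_im, ofReal_re, ofReal_im, one_re, one_im]
  ring

lemma re_div_norm_le_diskMobius_ofReal (ht0 : 0 ≤ t) (ht1 : t < 1) (hu : ‖u‖ < 1) :
    u.re / ‖u‖ ≤ (diskMobius t u).re / ‖diskMobius t u‖ := by
  have hD := normSq_ofReal_mul_add_one_pos (abs_lt.2 ⟨by linarith, ht1⟩) hu
  rw [diskMobius_ofReal_eq_smul, re_div_norm_smul (inv_pos.2 hD),
    ← re_div_norm_smul (c := 1 - t ^ 2) (by nlinarith) u]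
  exact re_div_norm_le_re_add_ofReal_div_norm _
    (mul_nonneg ht0 (add_nonneg (by nlinarith) (normSq_nonneg _)))

lemma re_diskMobius_ofReal_pos (ht0 : 0 < t) (ht1 : t < 1) (hu : ‖u‖ < 1) (hx : 0 ≤ u.re) :
    0 < (diskMobius t u).re := by
  have hD := normSq_ofReal_mul_add_one_pos (abs_lt.2 ⟨by linarith, ht1⟩) hu
  rw [re_diskMobius_ofReal]
  have := normSq_nonneg u
  positivity

lemma norm_lt_norm_diskMobius_ofReal (ht0 : 0 < t) (ht1 : t < 1) (hu : ‖u‖ < 1)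
    (hx : 0 ≤ u.re) : ‖u‖ < ‖diskMobius t u‖ := by
  have hD := normSq_ofReal_mul_add_one_pos (abs_lt.2 ⟨by linarith, ht1⟩) hu
  have hu2 := normSq_lt_one_of_norm_lt_one hu
  rw [norm_lt_norm_iff_normSq_lt, ← sub_pos, normSq_diskMobius_ofReal_sub (normSq_pos.1 hD)]
  have := normSq_nonneg u
  have : 0 < 1 - normSq u := by linarith
  positivity

lemma norm_diskMobius_ofReal_lt_norm (ht0 : 0 < t) (ht1 : t < 1) (hu : ‖u‖ < 1)
    (hre : (diskMobius t u).re < 0) : ‖diskMobius t u‖ < ‖u‖ := by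
  have hD := normSq_ofReal_mul_add_one_pos (abs_lt.2 ⟨by linarith, ht1⟩) hu
  have hu2 := normSq_lt_one_of_norm_lt_one hu
  rw [re_diskMobius_ofReal] at hre
  have hA : (1 + t ^ 2) * u.re + t * (1 + normSq u) < 0 := by
    by_contra! h
    exact hre.not_ge (mul_nonneg (inv_nonneg.2 hD.le) h)
  have hx : u.re < 0 := by nlinarith [normSq_nonneg u]
  rw [norm_lt_norm_iff_normSq_lt, ← sub_neg, normSq_diskMobius_ofReal_sub (normSq_pos.1 hD)]
  refine div_neg_of_neg_of_pos (mul_neg_of_pos_of_neg (by nlinarith) ?_) hD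
  nlinarith [mul_pos (by nlinarith : (0 : ℝ) < 1 - t ^ 2) (neg_pos.2 hx)]

end DiskMobius

section Eigenfunction

open Set

variable {f : ℝ → ℝ}

-- Also at `z = 0`, where the right-hand side is `f 0 * (0 / 0) = 0`.
lemma dirEigenfunction_eq (f : ℝ → ℝ) (s z : ℂ) :
    dirEigenfunction f s z = f ‖z‖ * ((z * conj s).re / ‖z‖) := by
  unfold dirEigenfunction
  split_ifs with hz
  · simp [hz]
  · simp only [mul_re, conj_re, conj_im]
    ring

lemma dirEigenfunction_eq_one_conj_mul {s : ℂ} (hs : ‖s‖ = 1) (z : ℂ) :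
    dirEigenfunction f s z = dirEigenfunction f 1 (conj s * z) := by
  rw [dirEigenfunction_eq, dirEigenfunction_eq, map_one, mul_one, norm_mul, norm_conj, hs,
    one_mul, mul_comm (conj s)]

lemma nonneg_of_monotoneOn_Icc (hmono : MonotoneOn f (Icc 0 1)) (hf0 : f 0 = 0) {r : ℝ}
    (hr : r ∈ Icc 0 1) : 0 ≤ f r :=
  hf0 ▸ hmono (left_mem_Icc.2 zero_le_one) hr hr.1

lemma pos_of_strictMonoOn_Icc (hmono : StrictMonoOn f (Icc 0 1)) (hf0 : f 0 = 0) {r : ℝ}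
    (hr : r ∈ Ioc 0 1) : 0 < f r :=
  hf0 ▸ hmono (left_mem_Icc.2 zero_le_one) (Ioc_subset_Icc_self hr) hr.1

lemma dirEigenfunction_one_lt_of_re_div_norm_le (hmono : StrictMonoOn f (Icc 0 1))
    (hf0 : f 0 = 0) {u w : ℂ} (hu : ‖u‖ ≤ 1) (hw : ‖w‖ ≤ 1)
    (hcos : u.re / ‖u‖ ≤ w.re / ‖w‖) (hright : 0 ≤ u.re → ‖u‖ < ‖w‖ ∧ 0 < w.re)
    (hleft : w.re < 0 → ‖w‖ < ‖u‖) :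
    dirEigenfunction f 1 u < dirEigenfunction f 1 w := by
  simp only [dirEigenfunction_eq, map_one, mul_one]
  have hu' : ‖u‖ ∈ Icc 0 1 := ⟨norm_nonneg u, hu⟩
  have hw' : ‖w‖ ∈ Icc 0 1 := ⟨norm_nonneg w, hw⟩
  have hfw := nonneg_of_monotoneOn_Icc hmono.monotoneOn hf0 hw'
  rcases le_or_gt 0 u.re with hx | hx
  · obtain ⟨hlt, hwre⟩ := hright hx
    calc f ‖u‖ * (u.re / ‖u‖)
        ≤ f ‖u‖ * (w.re / ‖w‖) :=
          mul_le_mul_of_nonneg_left hcos (nonneg_of_monotoneOn_Icc hmono.monotoneOn hf0 hu')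
      _ < f ‖w‖ * (w.re / ‖w‖) :=
          mul_lt_mul_of_pos_right (hmono hu' hw' hlt) (div_pos hwre (hwre.trans_le (re_le_norm w)))
  have hu0 : 0 < ‖u‖ := (abs_pos_of_neg hx).trans_le (abs_re_le_norm u)
  have hcosu : u.re / ‖u‖ < 0 := div_neg_of_neg_of_pos hx hu0
  rcases le_or_gt 0 w.re with hwre | hwre
  · calc f ‖u‖ * (u.re / ‖u‖)
        < 0 := mul_neg_of_pos_of_neg (pos_of_strictMonoOn_Icc hmono hf0 ⟨hu0, hu⟩) hcosu
      _ ≤ f ‖w‖ * (w.re / ‖w‖) := mul_nonneg hfw (div_nonneg hwre (norm_nonneg w))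
  · calc f ‖u‖ * (u.re / ‖u‖)
        < f ‖w‖ * (u.re / ‖u‖) := mul_lt_mul_of_neg_right (hmono hw' hu' (hleft hwre)) hcosu
      _ ≤ f ‖w‖ * (w.re / ‖w‖) := mul_le_mul_of_nonneg_left hcos hfw

lemma dirEigenfunction_one_lt_diskMobius_ofReal (hmono : StrictMonoOn f (Icc 0 1))
    (hf0 : f 0 = 0) {t : ℝ} (ht0 : 0 < t) (ht1 : t < 1) {u : ℂ} (hu : ‖u‖ < 1) :
    dirEigenfunction f 1 u < dirEigenfunction f 1 (diskMobius t u) :=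
  dirEigenfunction_one_lt_of_re_div_norm_le hmono hf0 hu.le
    (norm_diskMobius_lt_one (by rwa [norm_real, Real.norm_of_nonneg ht0.le]) hu).le
    (re_div_norm_le_diskMobius_ofReal ht0.le ht1 hu)
    (fun hx ↦
      ⟨norm_lt_norm_diskMobius_ofReal ht0 ht1 hu hx, re_diskMobius_ofReal_pos ht0 ht1 hu hx⟩)
    (norm_diskMobius_ofReal_lt_norm ht0 ht1 hu)

lemma dirEigenfunction_lt_comp_diskMobius (hmono : StrictMonoOn f (Icc 0 1)) (hf0 : f 0 = 0)
    {s : ℂ} (hs : ‖s‖ = 1) {t : ℝ} (ht0 : 0 < t) (ht1 : t < 1) {z : ℂ} (hz : ‖z‖ < 1) :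
    dirEigenfunction f s z < dirEigenfunction f s (diskMobius (t * s) z) := by
  rw [dirEigenfunction_eq_one_conj_mul hs, dirEigenfunction_eq_one_conj_mul hs,
    conj_mul_diskMobius_ofReal_mul hs]
  exact dirEigenfunction_one_lt_diskMobius_ofReal hmono hf0 ht0 ht1
    (by rwa [norm_mul, norm_conj, hs, one_mul])

lemma abs_dirEigenfunction_le (hmono : MonotoneOn f (Icc 0 1)) (hf0 : f 0 = 0) (s : ℂ)
    {z : ℂ} (hz : ‖z‖ ≤ 1) : |dirEigenfunction f s z| ≤ f 1 * ‖s‖ := by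
  have hz' : ‖z‖ ∈ Icc 0 1 := ⟨norm_nonneg z, hz⟩
  have hf1 : (1 : ℝ) ∈ Icc 0 1 := right_mem_Icc.2 zero_le_one
  rw [dirEigenfunction_eq, abs_mul, abs_of_nonneg (nonneg_of_monotoneOn_Icc hmono hf0 hz')]
  refine mul_le_mul (hmono hz' hf1 hz) ?_ (abs_nonneg _) (nonneg_of_monotoneOn_Icc hmono hf0 hf1)
  rw [abs_div, abs_norm]
  refine div_le_of_le_mul₀ (norm_nonneg z) (norm_nonneg s) ?_
  calc |(z * conj s).re| ≤ ‖z * conj s‖ := abs_re_le_norm _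
    _ = ‖s‖ * ‖z‖ := by rw [norm_mul, norm_conj, mul_comm]

variable {α : Type*} [MeasurableSpace α] {μ : Measure α}

lemma aestronglyMeasurable_dirEigenfunction_comp (hmono : MonotoneOn f (Icc 0 1)) (s : ℂ)
    {g : α → ℂ} (hg : Measurable g) (hgμ : ∀ᵐ x ∂μ, ‖g x‖ ≤ 1) :
    AEStronglyMeasurable (fun x ↦ dirEigenfunction f s (g x)) μ := by
  obtain ⟨F, hF, hFf⟩ : ∃ F : ℝ → ℝ, Measurable F ∧ EqOn F f (Icc 0 1) :=
    ⟨IccExtend zero_le_one ((Icc 0 1).domRestrict f),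
      ((monotoneOn_iff_monotone.1 hmono).IccExtend zero_le_one).measurable,
      fun r hr ↦ IccExtend_of_mem _ _ hr⟩
  refine (Measurable.aestronglyMeasurable (f := fun x ↦ dirEigenfunction F s (g x)) ?_).congr ?_
  · simp only [dirEigenfunction_eq]
    fun_prop
  · filter_upwards [hgμ] with x hx
    rw [dirEigenfunction_eq, dirEigenfunction_eq, hFf ⟨norm_nonneg _, hx⟩]

lemma integrable_dirEigenfunction_comp [IsFiniteMeasure μ] (hmono : MonotoneOn f (Icc 0 1))
    (hf0 : f 0 = 0) (s : ℂ) {g : α → ℂ} (hg : Measurable g) (hgμ : ∀ᵐ x ∂μ, ‖g x‖ ≤ 1) :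
    Integrable (fun x ↦ dirEigenfunction f s (g x)) μ :=
  .of_bound (aestronglyMeasurable_dirEigenfunction_comp hmono s hg hgμ) (f 1 * ‖s‖)
    (by filter_upwards [hgμ] with x hx using abs_dirEigenfunction_le hmono hf0 s hx)

end Eigenfunction

lemma measure_eq_zero_of_integral_eq_of_ae_lt {α : Type*} [MeasurableSpace α] {μ : Measure α}
    {g h : α → ℝ} (hg : Integrable g μ) (hh : Integrable h μ) (hlt : ∀ᵐ x ∂μ, g x < h x)
    (heq : ∫ x, g x ∂μ = ∫ x, h x ∂μ) : μ = 0 := by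
  have hgh : g =ᵐ[μ] h := (integral_eq_iff_of_ae_le hg hh (hlt.mono fun _ ↦ le_of_lt)).1 heq
  rw [← ae_eq_bot, ← Filter.eventually_false_iff_eq_bot]
  filter_upwards [hgh, hlt] with x hx hx' using hx'.ne hx

theorem renormalizing_point_unique_general (f : ℝ → ℝ)
    (hmono : StrictMonoOn f (Set.Icc 0 1))
    (hf0 : f 0 = 0)
    (ν : Measure ℂ) [IsFiniteMeasure ν] (hν : ν ≠ 0)
    (hsupp : ν (ball (0 : ℂ) 1)ᶜ = 0)
    (η : ℂ) (hη : η ∈ ball (0 : ℂ) 1)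
    (hren0 : ∀ s : ℂ, ‖s‖ = 1 → ∫ z, dirEigenfunction f s z ∂ν = 0)
    (hrenη : ∀ s : ℂ, ‖s‖ = 1 →
      ∫ z, dirEigenfunction f s (diskMobius η z) ∂ν = 0) :
    η = 0 := by
  by_contra hη0
  have hη1 : ‖η‖ < 1 := mem_ball_zero_iff.1 hη
  set s : ℂ := η / ‖η‖
  have hs : ‖s‖ = 1 := by simp [s, hη0]
  have hηs : (‖η‖ : ℂ) * s = η := mul_div_cancel₀ η (by simpa using hη0)
  have hdisk : ∀ᵐ z ∂ν, ‖z‖ < 1 :=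
    Filter.mem_of_superset (mem_ae_iff.2 hsupp) fun _ ↦ mem_ball_zero_iff.1
  have hlt : ∀ᵐ z ∂ν, dirEigenfunction f s z < dirEigenfunction f s (diskMobius η z) := by
    filter_upwards [hdisk] with z hz
    simpa only [hηs] using
      dirEigenfunction_lt_comp_diskMobius hmono hf0 hs (norm_pos_iff.2 hη0) hη1 hz
  refine hν (measure_eq_zero_of_integral_eq_of_ae_lt ?_ ?_ hlt (by rw [hren0 s hs, hrenη s hs]))
  · exact integrable_dirEigenfunction_comp hmono.monotoneOn hf0 s measurable_id
      (hdisk.mono fun _ ↦ le_of_lt)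
  · exact integrable_dirEigenfunction_comp hmono.monotoneOn hf0 s (measurable_diskMobius η)
      (hdisk.mono fun _ hz ↦ (norm_diskMobius_lt_one hη1 hz).le)

/-- if a finite nonzero positive Borel measure on the (open) unit disk is
renormalized both by `ξ = 0` and by `d_η` for some `η` in the disk, then `η = 0`. -/
theorem renormalizing_point_unique (f : ℝ → ℝ)
    (hcont : ContinuousOn f (Set.Icc 0 1))
    (hmono : StrictMonoOn f (Set.Icc 0 1))
    (hf0 : f 0 = 0) (hfpos : ∀ x ∈ Set.Ioc (0 : ℝ) 1, 0 < f x)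
    (ν : Measure ℂ) [IsFiniteMeasure ν] (hν : ν ≠ 0)
    (hsupp : ν (ball (0 : ℂ) 1)ᶜ = 0)
    (η : ℂ) (hη : η ∈ ball (0 : ℂ) 1)
    (hren0 : ∀ s : ℂ, ‖s‖ = 1 → ∫ z, dirEigenfunction f s z ∂ν = 0)
    (hrenη : ∀ s : ℂ, ‖s‖ = 1 →
      ∫ z, dirEigenfunction f s (diskMobius η z) ∂ν = 0) :
    η = 0 :=
  renormalizing_point_unique_general f hmono hf0 ν hν hsupp η hη hren0 hrenη
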